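/- Let C = {0,1}^ℕ be the Cantor cube, let X ⊆ C be a σ-compact subset, let F be a nonempty compact subset of X, and let n ≥ 1 be a natural number. Then the set 𝒜_n(X,F) = {A ∈ 𝒦(C) : A ⊆ X, 1 ≤ |A'| ≤ n, and A' ⊆ F} is an F_σδ subset of 𝒦(C), and the set 𝒜_ω(X,F) = {A ∈ 𝒦(C) : A ⊆ X, A' is nonempty and finite, and A' ⊆ F} is an F_σδσ subset of 𝒦(C). -/

import Mathlib

open TopologicalSpace Filter Set

/-- `𝒜_n(X) = {A ∈ 𝒦(X) : 1 ≤ |A'| ≤ n}` where `A'` is the derived set of `A` in `X`. -/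
def An (X : Type*) [MetricSpace X] (n : ℕ) : Set (NonemptyCompacts X) :=
  {A | 1 ≤ (derivedSet (A : Set X)).ncard ∧ (derivedSet (A : Set X)).ncard ≤ n}

/-- `𝒜_n(X,F) = {A ∈ 𝒜_n(X) : A' ⊆ F}`. -/
def AnF (X : Type*) [MetricSpace X] (n : ℕ) (F : Set X) : Set (NonemptyCompacts X) :=
  {A | A ∈ An X n ∧ derivedSet (A : Set X) ⊆ F}

/-- `𝒜_ω(X) = {A ∈ 𝒦(X) : A' is nonempty and finite}`. -/
def Aom (X : Type*) [MetricSpace X] : Set (NonemptyCompacts X) :=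
  {A | (derivedSet (A : Set X)).Nonempty ∧ (derivedSet (A : Set X)).Finite}

/-- `𝒜_ω(X,F) = {A ∈ 𝒜_ω(X) : A' ⊆ F}`. -/
def AomF (X : Type*) [MetricSpace X] (F : Set X) : Set (NonemptyCompacts X) :=
  {A | A ∈ Aom X ∧ derivedSet (A : Set X) ⊆ F}

/-- `𝒜_{ω+1}(X) = {A ∈ 𝒦(X) : A' is nonempty and countable}`. -/
def Aom1 (X : Type*) [MetricSpace X] : Set (NonemptyCompacts X) :=
  {A | (derivedSet (A : Set X)).Nonempty ∧ (derivedSet (A : Set X)).Countable}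

/-- `ℋ(X) = {A ∈ 𝒦(X) : A countable}`. -/
def HH (X : Type*) [MetricSpace X] : Set (NonemptyCompacts X) :=
  {A | (A : Set X).Countable}

/-- F_σ set: a countable union of closed sets. -/
def IsFsigma {Y : Type*} [TopologicalSpace Y] (S : Set Y) : Prop :=
  ∃ f : ℕ → Set Y, (∀ i, IsClosed (f i)) ∧ S = ⋃ i, f i

/-- F_σδ set: a countable intersection of F_σ sets. -/
def IsFsigmaDelta {Y : Type*} [TopologicalSpace Y] (S : Set Y) : Prop :=
  ∃ f : ℕ → Set Y, (∀ i, IsFsigma (f i)) ∧ S = ⋂ i, f i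

/-- F_σδσ set: a countable union of F_σδ sets. -/
def IsFsigmaDeltaSigma {Y : Type*} [TopologicalSpace Y] (S : Set Y) : Prop :=
  ∃ f : ℕ → Set Y, (∀ i, IsFsigmaDelta (f i)) ∧ S = ⋃ i, f i

/-- G_δσ set: a countable union of G_δ sets. -/
def IsGdeltaSigma {Y : Type*} [TopologicalSpace Y] (S : Set Y) : Prop :=
  ∃ f : ℕ → Set Y, (∀ i, IsGδ (f i)) ∧ S = ⋃ i, f i

/-- G_δσδ set: a countable intersection of G_δσ sets. -/
def IsGdeltaSigmaDelta {Y : Type*} [TopologicalSpace Y] (S : Set Y) : Prop :=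
  ∃ f : ℕ → Set Y, (∀ i, IsGdeltaSigma (f i)) ∧ S = ⋂ i, f i

/-- A space is of the first category in itself if it is the union of countably many
subsets that are nowhere dense in it. -/
def FirstCategoryInItself (T : Type*) [TopologicalSpace T] : Prop :=
  ∃ f : ℕ → Set T, (∀ i, IsNowhereDense (f i)) ∧ (⋃ i, f i) = Set.univ

/-- A space is strongly homogeneous if any two nonempty clopen subsets are homeomorphic. -/
def StronglyHomogeneous (T : Type*) [TopologicalSpace T] : Prop :=
  ∀ U V : Set T, IsClopen U → IsClopen V → U.Nonempty → V.Nonempty → Nonempty (↥U ≃ₜ ↥V)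

/-- The standard set `P₃` in the Cantor cube `{0,1}^ℕ`. -/
def P3 : Set (ℕ → Bool) :=
  {x | ∀ n : ℕ, ∀ᶠ k in Filter.atTop, x (2 ^ n * (2 * k + 1)) = false}

/-- The standard set `S₄` in the Cantor cube `{0,1}^ℕ`. -/
def S4 : Set (ℕ → Bool) :=
  {x | ∀ᶠ n in Filter.atTop, ∀ᶠ k in Filter.atTop, x (2 ^ n * (2 * k + 1)) = false}

/-- The standard set `Π₃` in the Hilbert cube `[0,1]^ℕ`. -/
def Pi3 : Set (ℕ → ↥unitInterval) :=
  {x | ∀ n : ℕ, ∀ᶠ m in Filter.atTop, x (2 ^ n * (2 * m + 1)) = 0}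

/-- The standard set `Σ₄` in the Hilbert cube `[0,1]^ℕ`. -/
def Sigma4 : Set (ℕ → ↥unitInterval) :=
  {x | ∃ n₀ : ℕ, ∀ n ≥ n₀, ∀ᶠ m in Filter.atTop, x (2 ^ n * (2 * m + 1)) = 0}

/-- `c₀`: the space of real sequences converging to `0`, as a subspace of `ℝ^ℕ`
with the product topology. -/
def c0 : Set (ℕ → ℝ) := {x | Filter.Tendsto x Filter.atTop (nhds 0)}

/-- A metric on the Cantor cube `{0,1}^ℕ` compatible with its product topology. -/
noncomputable instance : MetricSpace (ℕ → Bool) :=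
  TopologicalSpace.metrizableSpaceMetric _

/-!
Let `A'` be the derived set of a compact `A` and fix a countable basis. For open `V`, the sets
`{A : |A ∩ V| ≥ k}` are Vietoris-open, so `{A : A ∩ V finite}` is `F_σ`. By compactness, `A ∩ V`
is infinite exactly when `A'` meets `closure V`. Hence `A' ≠ ∅` says that `A` is infinite (a `G_δ`
condition), `|A'| ≤ n` says that of any `n + 1` basic sets with pairwise disjoint closures one
meets `A` in a finite set, and `A' ⊆ F` together with `A ⊆ X` says that `A ∩ V` is a finite subset
of `X`, i.e. of a finite union of the closed pieces of `X`, for every basic `V` whose closure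
misses `F`. So `𝒜_n(X, F)` is a countable intersection of `F_σ` sets, and `𝒜_ω(X, F)` is the union
of the `𝒜_n(X, F)`.
-/

open Topology

section Fsigma

variable {Y : Type*} [TopologicalSpace Y]

theorem IsClosed.isFsigma {S : Set Y} (h : IsClosed S) : IsFsigma S :=
  ⟨fun _ => S, fun _ => h, (iUnion_const S).symm⟩

theorem IsSigmaCompact.isFsigma [T2Space Y] {S : Set Y} (h : IsSigmaCompact S) : IsFsigma S := by
  obtain ⟨K, hK, rfl⟩ := h
  exact ⟨K, fun i => (hK i).isClosed, rfl⟩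

theorem IsOpen.isFsigma [PerfectlyNormalSpace Y] {U : Set Y} (h : IsOpen U) : IsFsigma U := by
  obtain ⟨f, hf, hUf⟩ := h.isClosed_compl.isGδ.eq_iInter_nat
  refine ⟨fun i => (f i)ᶜ, fun i => (hf i).isClosed_compl, ?_⟩
  rw [← compl_iInter, ← hUf, compl_compl]

theorem isFsigma_iUnion {ι : Type*} [Countable ι] {g : ι → Set Y} (h : ∀ i, IsFsigma (g i)) :
    IsFsigma (⋃ i, g i) := by
  choose f hf hgf using h
  obtain ⟨e, he⟩ := exists_surjective_nat (Option (ι × ℕ))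
  let f' : Option (ι × ℕ) → Set Y := fun o => o.elim ∅ fun p => f p.1 p.2
  refine ⟨fun k => f' (e k), fun k => ?_, ?_⟩
  · show IsClosed (f' (e k))
    cases e k with
    | none => exact isClosed_empty
    | some p => exact hf p.1 p.2
  · rw [he.iUnion_comp f', iUnion_option, iUnion_prod']
    simp [f', hgf]

theorem IsFsigma.inter_isClosed {S C : Set Y} (hS : IsFsigma S) (hC : IsClosed C) :
    IsFsigma (S ∩ C) := by
  obtain ⟨f, hf, rfl⟩ := hS
  exact ⟨fun i => f i ∩ C, fun i => (hf i).inter hC, iUnion_inter C f⟩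

theorem isFsigmaDelta_iInter {ι : Type*} [Countable ι] {g : ι → Set Y}
    (h : ∀ i, IsFsigma (g i)) : IsFsigmaDelta (⋂ i, g i) := by
  obtain ⟨e, he⟩ := exists_surjective_nat (Option ι)
  let g' : Option ι → Set Y := fun o => o.elim univ g
  refine ⟨fun k => g' (e k), fun k => ?_, ?_⟩
  · show IsFsigma (g' (e k))
    cases e k with
    | none => exact isClosed_univ.isFsigma
    | some i => exact h i
  · rw [he.iInter_comp g', iInter_option]
    simp [g']

theorem IsFsigmaDelta.inter {S T : Set Y} (hS : IsFsigmaDelta S) (hT : IsFsigmaDelta T) :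
    IsFsigmaDelta (S ∩ T) := by
  obtain ⟨f, hf, rfl⟩ := hS
  obtain ⟨g, hg, rfl⟩ := hT
  have h := isFsigmaDelta_iInter (g := Sum.elim f g) (Sum.forall.2 ⟨hf, hg⟩)
  rwa [iInter_sum] at h

end Fsigma

theorem Set.finite_iff_exists_encard_lt {α : Type*} {s : Set α} :
    s.Finite ↔ ∃ k : ℕ, s.encard < k := by
  rw [← encard_lt_top_iff]
  exact ⟨fun h => ENat.exists_nat_gt h.ne, fun ⟨k, hk⟩ => hk.trans (ENat.natCast_lt_top k)⟩

theorem Set.exists_injective_fin_of_le_encard {α : Type*} {s : Set α} {k : ℕ}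
    (h : (k : ℕ∞) ≤ s.encard) : ∃ x : Fin k → α, Function.Injective x ∧ ∀ j, x j ∈ s := by
  obtain ⟨t, hts, htk⟩ := exists_subset_encard_eq h
  have ht : t.Finite := finite_of_encard_eq_coe htk
  have hcard : ht.toFinset.card = k := by
    rw [← ENat.natCast_inj, ← encard_coe_eq_coe_finsetCard, Finite.coe_toFinset, htk]
  let e := ht.toFinset.equivFinOfCardEq hcard
  exact ⟨fun j => e.symm j, fun i j hij => e.symm.injective (Subtype.ext hij),
    fun j => hts (ht.mem_toFinset.1 (e.symm j).2)⟩

theorem Set.one_le_ncard_and_ncard_le_iff {α : Type*} {s : Set α} {n : ℕ} :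
    1 ≤ s.ncard ∧ s.ncard ≤ n ↔ s.Nonempty ∧ s.encard ≤ n := by
  rw [encard_le_coe_iff_finite_ncard_le]
  constructor
  · rintro ⟨h1, h2⟩
    exact ⟨nonempty_of_ncard_ne_zero (by omega), finite_of_ncard_pos h1, h2⟩
  · rintro ⟨hne, hfin, h⟩
    exact ⟨(ncard_pos hfin).2 hne, h⟩

namespace TopologicalSpace.NonemptyCompacts

section

variable {M : Type*} [TopologicalSpace M]

theorem isOpen_setOf_le_encard_inter [T2Space M] {U : Set M} (hU : IsOpen U) (k : ℕ) :
    IsOpen {A : NonemptyCompacts M | (k : ℕ∞) ≤ ((A : Set M) ∩ U).encard} := by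
  rw [isOpen_iff_forall_mem_open]
  intro A hA
  obtain ⟨t, htA, htk⟩ := exists_subset_encard_eq hA
  have ht : t.Finite := finite_of_encard_eq_coe htk
  obtain ⟨V, hV, hdisj⟩ := ht.t2_separation
  refine ⟨⋂ x ∈ t, {B | ((B : Set M) ∩ (V x ∩ U)).Nonempty}, fun B hB => ?_,
    ht.isOpen_biInter fun x _ => isOpen_inter_nonempty_of_isOpen ((hV x).2.inter hU),
    mem_iInter₂.2 fun x hx => ⟨x, (htA hx).1, (hV x).1, (htA hx).2⟩⟩
  choose! y hyB hyV hyU using mem_iInter₂.1 hB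
  have hinj : InjOn y t := fun x hx x' hx' hyx =>
    by_contra fun hne => (hdisj hx hx' hne).ne_of_mem (hyV x hx) (hyx ▸ hyV x' hx') rfl
  calc (k : ℕ∞) = (y '' t).encard := by rw [hinj.encard_image, htk]
    _ ≤ ((B : Set M) ∩ U).encard :=
      encard_le_encard (image_subset_iff.2 fun x hx => ⟨hyB x hx, hyU x hx⟩)

theorem isFsigma_setOf_inter_finite [T2Space M] {U : Set M} (hU : IsOpen U) :
    IsFsigma {A : NonemptyCompacts M | ((A : Set M) ∩ U).Finite} := by
  refine ⟨fun k => {A | (k : ℕ∞) ≤ ((A : Set M) ∩ U).encard}ᶜ,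
    fun k => (isOpen_setOf_le_encard_inter hU k).isClosed_compl, ?_⟩
  ext A
  simp [finite_iff_exists_encard_lt]

theorem isClosed_setOf_inter_subset {U C : Set M} (hU : IsOpen U) (hC : IsClosed C) :
    IsClosed {A : NonemptyCompacts M | (A : Set M) ∩ U ⊆ C} := by
  have h : {A : NonemptyCompacts M | (A : Set M) ∩ U ⊆ C}ᶜ =
      {A : NonemptyCompacts M | ((A : Set M) ∩ (U ∩ Cᶜ)).Nonempty} := by
    ext A
    simp [not_subset, Set.Nonempty, and_assoc]
  exact isOpen_compl_iff.1 (h ▸ isOpen_inter_nonempty_of_isOpen (hU.inter hC.isOpen_compl))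

theorem isFsigma_setOf_inter_finite_and_subset [T2Space M] {U X : Set M} (hU : IsOpen U)
    (hX : IsFsigma X) :
    IsFsigma {A : NonemptyCompacts M | ((A : Set M) ∩ U).Finite ∧ (A : Set M) ∩ U ⊆ X} := by
  obtain ⟨K, hK, rfl⟩ := hX
  have h : {A : NonemptyCompacts M | ((A : Set M) ∩ U).Finite ∧ (A : Set M) ∩ U ⊆ ⋃ i, K i} =
      ⋃ s : Finset ℕ, {A : NonemptyCompacts M | ((A : Set M) ∩ U).Finite} ∩
        {A | (A : Set M) ∩ U ⊆ ⋃ i ∈ s, K i} := by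
    ext A
    simp only [mem_ofPred_eq, mem_iUnion, mem_inter_iff]
    constructor
    · rintro ⟨hfin, hsub⟩
      obtain ⟨I, hI, hsubI⟩ := finite_subset_iUnion hfin hsub
      exact ⟨hI.toFinset, hfin, by simpa using hsubI⟩
    · rintro ⟨s, hfin, hsub⟩
      exact ⟨hfin, hsub.trans (iUnion₂_subset fun i _ => subset_iUnion K i)⟩
  rw [h]
  exact isFsigma_iUnion fun s => (isFsigma_setOf_inter_finite hU).inter_isClosed
    (isClosed_setOf_inter_subset hU (isClosed_biUnion_finset fun i _ => hK i))

end

theorem isFsigmaDelta_setOf_infinite {M : Type*} [MetricSpace M] :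
    IsFsigmaDelta {A : NonemptyCompacts M | (A : Set M).Infinite} := by
  have h : {A : NonemptyCompacts M | (A : Set M).Infinite} =
      ⋂ k : ℕ, {A : NonemptyCompacts M | (k : ℕ∞) ≤ ((A : Set M) ∩ univ).encard} := by
    ext A
    simp [Set.Infinite, finite_iff_exists_encard_lt]
  rw [h]
  exact isFsigmaDelta_iInter fun k => (isOpen_setOf_le_encard_inter isOpen_univ k).isFsigma

end TopologicalSpace.NonemptyCompacts

section DerivedSet

variable {M : Type*} [TopologicalSpace M] {A F U X : Set M}

theorem infinite_inter_of_mem_derivedSet [T1Space M] {x : M} (hx : x ∈ derivedSet A)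
    (hU : U ∈ 𝓝 x) : (A ∩ U).Infinite :=
  inter_comm U A ▸ Set.Infinite.of_accPt (hx.nhds_inter hU)

theorem IsCompact.exists_mem_derivedSet_closure (hA : IsCompact A) (h : (A ∩ U).Infinite) :
    ∃ x ∈ derivedSet A, x ∈ closure U := by
  obtain ⟨x, -, hx⟩ := h.exists_accPt_of_subset_isCompact hA inter_subset_left
  exact ⟨x, hx.mono (principal_mono.2 inter_subset_left),
    closure_mono inter_subset_right (derivedSet_subset_closure _ hx)⟩

theorem IsCompact.derivedSet_nonempty_iff [T1Space M] (hA : IsCompact A) :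
    (derivedSet A).Nonempty ↔ A.Infinite := by
  refine ⟨fun ⟨x, hx⟩ => ?_, fun h => ?_⟩
  · simpa using infinite_inter_of_mem_derivedSet hx univ_mem
  · obtain ⟨x, hx, -⟩ := hA.exists_mem_derivedSet_closure (U := univ) (by simpa using h)
    exact ⟨x, hx⟩

namespace TopologicalSpace.IsTopologicalBasis

variable [RegularSpace M] {B : Set (Set M)}

theorem exists_disjoint_closure (hB : IsTopologicalBasis B) (hF : IsClosed F) {x : M}
    (hx : x ∉ F) : ∃ V ∈ B, x ∈ V ∧ Disjoint (closure V) F := by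
  obtain ⟨V, hVB, hxV, hVF⟩ := hB.exists_closure_subset (hF.isOpen_compl.mem_nhds hx)
  exact ⟨V, hVB, hxV, subset_compl_iff_disjoint_right.1 hVF⟩

theorem exists_pairwise_disjoint_closure [T2Space M] (hB : IsTopologicalBasis B) {ι : Type*}
    [Finite ι] {x : ι → M} (hx : Function.Injective x) :
    ∃ V : ι → B, (∀ j, x j ∈ (V j : Set M)) ∧
      Pairwise (fun j j' => Disjoint (closure (V j : Set M)) (closure (V j'))) := by
  obtain ⟨U, hU, hdisj⟩ := (finite_range x).t2_separation
  choose V hVB hxV hVU using fun j =>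
    hB.exists_closure_subset ((hU (x j)).2.mem_nhds (hU (x j)).1)
  exact ⟨fun j => ⟨V j, hVB j⟩, hxV, fun j j' hjj' =>
    (hdisj (mem_range_self j) (mem_range_self j') (hx.ne hjj')).mono (hVU j) (hVU j')⟩

theorem derivedSet_subset_iff [T1Space M] (hB : IsTopologicalBasis B) (hA : IsCompact A)
    (hF : IsClosed F) :
    derivedSet A ⊆ F ↔ ∀ V ∈ B, Disjoint (closure V) F → (A ∩ V).Finite := by
  refine ⟨fun h V _ hVF => ?_, fun h x hx => ?_⟩
  · by_contra hinf
    obtain ⟨x, hxA, hxV⟩ := hA.exists_mem_derivedSet_closure hinf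
    exact hVF.ne_of_mem hxV (h hxA) rfl
  · by_contra hxF
    obtain ⟨V, hVB, hxV, hVF⟩ := hB.exists_disjoint_closure hF hxF
    exact infinite_inter_of_mem_derivedSet hx (hB.mem_nhds hVB hxV) (h V hVB hVF)

theorem subset_iff_forall_inter_subset (hB : IsTopologicalBasis B) (hF : IsClosed F)
    (hFX : F ⊆ X) : A ⊆ X ↔ ∀ V ∈ B, Disjoint (closure V) F → A ∩ V ⊆ X := by
  refine ⟨fun h V _ _ => inter_subset_left.trans h, fun h y hy => ?_⟩
  by_cases hyF : y ∈ F
  · exact hFX hyF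
  · obtain ⟨V, hVB, hyV, hVF⟩ := hB.exists_disjoint_closure hF hyF
    exact h V hVB hVF ⟨hy, hyV⟩

theorem encard_derivedSet_le_iff [T2Space M] (hB : IsTopologicalBasis B) (hA : IsCompact A)
    (n : ℕ) : (derivedSet A).encard ≤ n ↔ ∀ V : Fin (n + 1) → B,
      Pairwise (fun j j' => Disjoint (closure (V j : Set M)) (closure (V j'))) →
        ∃ j, (A ∩ V j).Finite := by
  refine ⟨fun h V hV => ?_, fun h => ?_⟩
  · by_contra! hinf
    choose x hxA hxV using fun j => hA.exists_mem_derivedSet_closure (hinf j)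
    have hx : Function.Injective x := fun j j' hjj' =>
      by_contra fun hne => (hV hne).ne_of_mem (hxV j) (hjj' ▸ hxV j') rfl
    have := (hx.encard_range.trans (encard_le_encard (range_subset_iff.2 hxA))).trans h
    simp only [ENat.card_eq_coe_fintype_card, Fintype.card_fin] at this
    norm_cast at this
    omega
  · by_contra! hlt
    obtain ⟨x, hx, hxA⟩ := exists_injective_fin_of_le_encard (Order.add_one_le_of_lt hlt)
    obtain ⟨V, hxV, hV⟩ := hB.exists_pairwise_disjoint_closure hx
    obtain ⟨j, hj⟩ := h V hV
    exact infinite_inter_of_mem_derivedSet (hxA j) (hB.mem_nhds (V j).2 (hxV j)) hj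

end TopologicalSpace.IsTopologicalBasis

end DerivedSet

theorem AomF_eq_iUnion_AnF {M : Type*} [MetricSpace M] (F : Set M) :
    AomF M F = ⋃ n, AnF M n F := by
  ext A
  simp only [AomF, Aom, AnF, An, mem_iUnion, mem_ofPred_eq]
  constructor
  · rintro ⟨⟨hne, hfin⟩, hF⟩
    exact ⟨_, ⟨(ncard_pos hfin).2 hne, le_rfl⟩, hF⟩
  · rintro ⟨n, ⟨h1, -⟩, hF⟩
    exact ⟨⟨nonempty_of_ncard_ne_zero (by omega), finite_of_ncard_pos h1⟩, hF⟩

section Main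

open TopologicalSpace.IsTopologicalBasis TopologicalSpace.NonemptyCompacts

variable {M : Type*} [MetricSpace M] [SecondCountableTopology M] {X F : Set M}

theorem isFsigmaDelta_setOf_subset_mem_AnF (hX : IsFsigma X) (hF : IsClosed F) (hFX : F ⊆ X)
    (n : ℕ) : IsFsigmaDelta {A : NonemptyCompacts M | (A : Set M) ⊆ X ∧ A ∈ AnF M n F} := by
  let B := countableBasis M
  have hB : IsTopologicalBasis B := isBasis_countableBasis M
  have : Countable B := (countable_countableBasis M).to_subtype
  have h : {A : NonemptyCompacts M | (A : Set M) ⊆ X ∧ A ∈ AnF M n F} =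
      {A : NonemptyCompacts M | (A : Set M).Infinite} ∩
      (⋂ V : {V : Fin (n + 1) → B //
          Pairwise (fun j j' => Disjoint (closure (V j : Set M)) (closure (V j')))},
        ⋃ j, {A | ((A : Set M) ∩ V.1 j).Finite}) ∩
      ⋂ V : {V : B // Disjoint (closure (V : Set M)) F},
        {A | ((A : Set M) ∩ V.1).Finite ∧ (A : Set M) ∩ V.1 ⊆ X} := by
    ext A
    have hA := A.isCompact
    simp only [AnF, An, mem_ofPred_eq, mem_inter_iff, mem_iInter, mem_iUnion, Subtype.forall]
    rw [one_le_ncard_and_ncard_le_iff, hA.derivedSet_nonempty_iff,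
      hB.encard_derivedSet_le_iff hA, hB.derivedSet_subset_iff hA hF,
      hB.subset_iff_forall_inter_subset hF hFX]
    simp only [imp_and, forall_and]
    tauto
  rw [h]
  exact (isFsigmaDelta_setOf_infinite.inter (isFsigmaDelta_iInter fun V =>
      isFsigma_iUnion fun j => isFsigma_setOf_inter_finite (hB.isOpen (V.1 j).2))).inter
    (isFsigmaDelta_iInter fun V =>
      isFsigma_setOf_inter_finite_and_subset (hB.isOpen V.1.2) hX)

theorem isFsigmaDeltaSigma_setOf_subset_mem_AomF (hX : IsFsigma X) (hF : IsClosed F)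
    (hFX : F ⊆ X) :
    IsFsigmaDeltaSigma {A : NonemptyCompacts M | (A : Set M) ⊆ X ∧ A ∈ AomF M F} :=
  ⟨_, isFsigmaDelta_setOf_subset_mem_AnF hX hF hFX, by
    ext A
    simp [AomF_eq_iUnion_AnF]⟩

end Main

theorem statement18_general (X : Set (ℕ → Bool)) (hX : IsSigmaCompact X)
    (F : Set (ℕ → Bool)) (hFc : IsCompact F) (hFX : F ⊆ X)
    (n : ℕ) :
    IsFsigmaDelta
      {A : NonemptyCompacts (ℕ → Bool) | (A : Set (ℕ → Bool)) ⊆ X ∧ A ∈ AnF (ℕ → Bool) n F} ∧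
    IsFsigmaDeltaSigma
      {A : NonemptyCompacts (ℕ → Bool) | (A : Set (ℕ → Bool)) ⊆ X ∧ A ∈ AomF (ℕ → Bool) F} :=
  ⟨isFsigmaDelta_setOf_subset_mem_AnF hX.isFsigma hFc.isClosed hFX n,
    isFsigmaDeltaSigma_setOf_subset_mem_AomF hX.isFsigma hFc.isClosed hFX⟩

theorem statement18 (X : Set (ℕ → Bool)) (hX : IsSigmaCompact X)
    (F : Set (ℕ → Bool)) (hFc : IsCompact F) (hFne : F.Nonempty) (hFX : F ⊆ X)
    (n : ℕ) (hn : 1 ≤ n) :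
    IsFsigmaDelta
      {A : NonemptyCompacts (ℕ → Bool) | (A : Set (ℕ → Bool)) ⊆ X ∧ A ∈ AnF (ℕ → Bool) n F} ∧
    IsFsigmaDeltaSigma
      {A : NonemptyCompacts (ℕ → Bool) | (A : Set (ℕ → Bool)) ⊆ X ∧ A ∈ AomF (ℕ → Bool) F} :=
  statement18_general X hX F hFc hFX n
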